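/- arXiv:2406.08032 — 3 statements merged into one kernel-verified Lean document; each statement's English description precedes it below -/
import Mathlib

section
/- There exists a finite constant C such that ∫_Γ a⁻¹ / (r(x)² sinh r(x)) dρ(x) ≤ C, where Γ = { x = (x₁,x₂,a) ∈ G : 0 < a < e⁻² and |x| < exp(√(log(1/a))) }. -/
set_option maxHeartbeats 1000000


open Real MeasureTheory Set
open scoped ENNReal NNReal

noncomputable section

/-- `cosh` of the hyperbolic distance from `p = (x₁, x₂, a)` to the identity `e = (0,0,1)`. -/
def chD (p : ℝ × ℝ × ℝ) : ℝ :=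
  (p.2.2 + (p.2.2)⁻¹ + (p.2.2)⁻¹ * (p.1 ^ 2 + p.2.1 ^ 2)) / 2

/-- The hyperbolic distance `r(p)` from `p` to the identity, i.e. `arcosh (chD p)`. -/
def rD (p : ℝ × ℝ × ℝ) : ℝ := Real.log (chD p + Real.sqrt (chD p ^ 2 - 1))

/-- `|x| = √(x₁² + x₂²)`. -/
def nm (p : ℝ × ℝ × ℝ) : ℝ := Real.sqrt (p.1 ^ 2 + p.2.1 ^ 2)

/-- The kernel `k₁`. -/
def k1 (p : ℝ × ℝ × ℝ) : ℝ :=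
  -(2 * Real.pi ^ 2)⁻¹ * (p.2.2)⁻¹ * p.1 *
    (Real.sinh (rD p) + rD p * Real.cosh (rD p)) / (rD p ^ 2 * Real.sinh (rD p) ^ 3)

/-- The kernel `k₂`. -/
def k2 (p : ℝ × ℝ × ℝ) : ℝ :=
  -(2 * Real.pi ^ 2)⁻¹ * (p.2.2)⁻¹ * p.2.1 *
    (Real.sinh (rD p) + rD p * Real.cosh (rD p)) / (rD p ^ 2 * Real.sinh (rD p) ^ 3)

/-- The kernel `k₀`. -/
def k0 (p : ℝ × ℝ × ℝ) : ℝ :=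
  (2 * Real.pi ^ 2)⁻¹ *
    (-(Real.sinh (rD p) + rD p * Real.cosh (rD p)) +
      (p.2.2)⁻¹ * (Real.cosh (rD p) * Real.sinh (rD p) + rD p)) /
    (rD p ^ 2 * Real.sinh (rD p) ^ 3)

/-- `y⁻¹ · x` in the group `G = ℝ² ⋊ ℝ⁺`. -/
def ginvMul (y x : ℝ × ℝ × ℝ) : ℝ × ℝ × ℝ :=
  ((y.2.2)⁻¹ * (x.1 - y.1), (y.2.2)⁻¹ * (x.2.1 - y.2.1), x.2.2 / y.2.2)

/-- The right Haar measure `ρ`, of density `a⁻¹` w.r.t. Lebesgue measure on `{a > 0}`. -/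
def ρG : Measure (ℝ × ℝ × ℝ) :=
  (volume.restrict {p : ℝ × ℝ × ℝ | 0 < p.2.2}).withDensity
    (fun p => ENNReal.ofReal (p.2.2)⁻¹)

/-- The left Haar measure `λ`, of density `a⁻³` w.r.t. Lebesgue measure on `{a > 0}`. -/
def lG : Measure (ℝ × ℝ × ℝ) :=
  (volume.restrict {p : ℝ × ℝ × ℝ | 0 < p.2.2}).withDensity
    (fun p => ENNReal.ofReal ((p.2.2) ^ 3)⁻¹)

/-- The set `P₀ = [−1,1] × [−1,1] × [e⁻¹, e]`. -/
def P0 : Set (ℝ × ℝ × ℝ) :=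
  {p | p.1 ∈ Icc (-1 : ℝ) 1 ∧ p.2.1 ∈ Icc (-1 : ℝ) 1 ∧
       p.2.2 ∈ Icc (Real.exp (-1)) (Real.exp 1)}

/-- The set `2P₀ = [−2,2] × [−2,2] × [e⁻², e²]`. -/
def twoP0 : Set (ℝ × ℝ × ℝ) :=
  {p | p.1 ∈ Icc (-2 : ℝ) 2 ∧ p.2.1 ∈ Icc (-2 : ℝ) 2 ∧
       p.2.2 ∈ Icc (Real.exp (-2)) (Real.exp 2)}

/-- The set `P_L = [L−1,L+1] × [−1,1] × [e⁻¹, e]`. -/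
def PL (L : ℝ) : Set (ℝ × ℝ × ℝ) :=
  {p | p.1 ∈ Icc (L - 1) (L + 1) ∧ p.2.1 ∈ Icc (-1 : ℝ) 1 ∧
       p.2.2 ∈ Icc (Real.exp (-1)) (Real.exp 1)}

/-- The set `2P_L = [L−2,L+2] × [−2,2] × [e⁻², e²]`. -/
def twoPL (L : ℝ) : Set (ℝ × ℝ × ℝ) :=
  {p | p.1 ∈ Icc (L - 2) (L + 2) ∧ p.2.1 ∈ Icc (-2 : ℝ) 2 ∧
       p.2.2 ∈ Icc (Real.exp (-2)) (Real.exp 2)}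

namespace S13

/-- The pointwise upper bound. -/
def bnd1 (p : ℝ × ℝ × ℝ) : ℝ :=
  16 * ((p.2.2)⁻¹ / ((-Real.log p.2.2) ^ 2 * (1 + (p.1 ^ 2 + p.2.1 ^ 2))))

lemma measurable_a : Measurable fun p : ℝ × ℝ × ℝ => p.2.2 := measurable_snd.snd

lemma measurable_chD : Measurable chD := by
  unfold chD
  exact (((measurable_a.add measurable_a.inv).add (measurable_a.inv.mul
    ((measurable_fst.pow_const 2).add (measurable_snd.fst.pow_const 2)))).div_const 2)

lemma measurable_rD : Measurable rD := by
  unfold rD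
  exact Real.measurable_log.comp (measurable_chD.add (Real.continuous_sqrt.measurable.comp
    ((measurable_chD.pow_const 2).sub measurable_const)))

lemma measurable_f : Measurable fun p : ℝ × ℝ × ℝ =>
    ENNReal.ofReal ((p.2.2)⁻¹ / (rD p ^ 2 * Real.sinh (rD p))) :=
  ENNReal.measurable_ofReal.comp (measurable_a.inv.div
    ((measurable_rD.pow_const 2).mul (Real.continuous_sinh.measurable.comp measurable_rD)))

lemma measurable_bnd1 : Measurable fun p => ENNReal.ofReal (bnd1 p) := by
  unfold bnd1
  exact ENNReal.measurable_ofReal.comp ((measurable_const.mul (measurable_a.inv.div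
    ((((Real.measurable_log.comp measurable_a).neg.pow_const 2)).mul
    (measurable_const.add ((measurable_fst.pow_const 2).add
      (measurable_snd.fst.pow_const 2)))))))

lemma exp_two_ge_four : (4:ℝ) ≤ Real.exp 2 := by
  have h := Real.add_one_le_exp (1:ℝ)
  have h2 : Real.exp 2 = Real.exp 1 * Real.exp 1 := by
    rw [← Real.exp_add]; norm_num
  nlinarith [Real.exp_pos 1]

lemma ptbound {p : ℝ × ℝ × ℝ} (ha : 0 < p.2.2) (ha2 : p.2.2 < Real.exp (-2)) :
    (p.2.2)⁻¹ * ((p.2.2)⁻¹ / (rD p ^ 2 * Real.sinh (rD p))) ≤ bnd1 p := by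
  set a := p.2.2 with hadef
  set s : ℝ := p.1 ^ 2 + p.2.1 ^ 2 with hsdef
  have hs : 0 ≤ s := by positivity
  have hA : 0 < a⁻¹ := by positivity
  have hexp4 : (4:ℝ) ≤ Real.exp 2 := exp_two_ge_four
  have hainv : Real.exp 2 < a⁻¹ := by
    have hprod : Real.exp 2 * Real.exp (-2) = 1 := by
      rw [← Real.exp_add]; norm_num
    nlinarith [mul_inv_cancel₀ (ne_of_gt ha), Real.exp_pos 2]
  have hc_eq : chD p = (a + a⁻¹ + a⁻¹ * s) / 2 := rfl
  set c : ℝ := chD p with hcdef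
  have hc_low : a⁻¹ * (1 + s) / 2 ≤ c := by
    rw [hc_eq]; nlinarith [mul_nonneg hA.le hs]
  have hc2 : 2 ≤ c := by nlinarith [mul_nonneg hA.le hs]
  have hq : 0 ≤ c ^ 2 - 1 := by nlinarith
  set t : ℝ := Real.sqrt (c ^ 2 - 1) with htdef
  have ht0 : 0 ≤ t := Real.sqrt_nonneg _
  have ht2 : t ^ 2 = c ^ 2 - 1 := Real.sq_sqrt hq
  have htc : c / 2 ≤ t := by nlinarith
  have hy : 0 < c + t := by linarith
  have hrd : rD p = Real.log (c + t) := rfl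
  have hL2 : 2 < -Real.log a := by
    have := (Real.log_lt_iff_lt_exp ha).2 ha2
    linarith
  have hlog2 : Real.log 2 ≤ 1 := by
    have := Real.log_le_sub_one_of_pos (by norm_num : (0:ℝ) < 2); linarith
  have hr_lb : (-Real.log a) / 2 ≤ rD p := by
    rw [hrd]
    have h1 : Real.log (a⁻¹ / 2) ≤ Real.log c :=
      Real.log_le_log (by positivity) (by nlinarith [mul_nonneg hA.le hs])
    have h2 : Real.log c ≤ Real.log (c + t) :=
      Real.log_le_log (by linarith) (by linarith)
    have h3 : Real.log (a⁻¹ / 2) = -Real.log a - Real.log 2 := by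
      rw [Real.log_div (by positivity) two_ne_zero, Real.log_inv]
    linarith
  have hsinh : Real.sinh (rD p) = t := by
    rw [hrd, Real.sinh_log hy]
    have hmul : (c + t) * (c - t) = 1 := by nlinarith
    have hinv : (c + t)⁻¹ = c - t := inv_eq_of_mul_eq_one_right hmul
    rw [hinv]; ring
  set L : ℝ := -Real.log a with hLdef
  have hr0 : 0 < rD p := by linarith
  have hsinh_lb : a⁻¹ * (1 + s) / 4 ≤ Real.sinh (rD p) := by
    rw [hsinh]; linarith
  have hr2 : (L / 2) ^ 2 ≤ rD p ^ 2 := by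
    have h0 : (0:ℝ) ≤ L / 2 := by linarith
    exact pow_le_pow_left₀ h0 hr_lb 2
  have hden_lb : L ^ 2 * a⁻¹ * (1 + s) / 16 ≤ rD p ^ 2 * Real.sinh (rD p) := by
    nlinarith [mul_le_mul hr2 hsinh_lb (by positivity) (sq_nonneg (rD p))]
  have hden_pos : (0:ℝ) < L ^ 2 * a⁻¹ * (1 + s) / 16 := by
    have : 0 < L := by linarith
    positivity
  have hbody : bnd1 p = 16 * (a⁻¹ / (L ^ 2 * (1 + s))) := rfl
  rw [hbody]
  have hL0 : L ≠ 0 := by intro h; rw [h] at hL2; norm_num at hL2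
  have h1s : (1:ℝ) + s ≠ 0 := by positivity
  calc a⁻¹ * (a⁻¹ / (rD p ^ 2 * Real.sinh (rD p)))
      = a⁻¹ ^ 2 / (rD p ^ 2 * Real.sinh (rD p)) := by ring
    _ ≤ a⁻¹ ^ 2 / (L ^ 2 * a⁻¹ * (1 + s) / 16) := by
        gcongr
    _ = 16 * (a⁻¹ / (L ^ 2 * (1 + s))) := by
        field_simp

lemma measurable_nm : Measurable nm := by
  unfold nm
  exact Real.continuous_sqrt.measurable.comp
    ((measurable_fst.pow_const 2).add (measurable_snd.fst.pow_const 2))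

lemma lintegral_inv_sq_add_sq {b : ℝ} (hb : 0 < b) :
    ∫⁻ x : ℝ, ENNReal.ofReal (1 / (b ^ 2 + x ^ 2)) = ENNReal.ofReal (π / b) := by
  have hfun : ∀ x : ℝ, 1 / (b ^ 2 + x ^ 2) = b⁻¹ ^ 2 * (1 + (x / b) ^ 2)⁻¹ := by
    intro x; field_simp
  have hint : Integrable (fun x : ℝ => 1 / (b ^ 2 + x ^ 2)) := by
    simp_rw [hfun]
    exact (integrable_inv_one_add_sq.comp_div hb.ne').const_mul _
  rw [← ofReal_integral_eq_lintegral_ofReal hint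
    (Filter.Eventually.of_forall fun x => by positivity)]
  congr 1
  simp_rw [hfun]
  rw [MeasureTheory.integral_const_mul]
  have := MeasureTheory.Measure.integral_comp_div (fun x : ℝ => (1 + x ^ 2)⁻¹) b
  rw [this, integral_univ_inv_one_add_sq, abs_of_pos hb, smul_eq_mul]
  field_simp

lemma lintegral_invsqrt {R : ℝ} (hR : 1 ≤ R) :
    ∫⁻ x in Ioc (-R) R, ENNReal.ofReal ((Real.sqrt (1 + x ^ 2))⁻¹)
      ≤ ENNReal.ofReal (4 + 2 * Real.log R) := by
  have hcont : Continuous fun x : ℝ => (Real.sqrt (1 + x ^ 2))⁻¹ := by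
    apply Continuous.inv₀
    · exact (continuous_const.add (continuous_pow 2)).sqrt
    · intro x; positivity
  have hint : IntegrableOn (fun x : ℝ => (Real.sqrt (1 + x ^ 2))⁻¹) (Ioc (-R) R) :=
    hcont.integrableOn_Ioc
  rw [← ofReal_integral_eq_lintegral_ofReal hint
    (Filter.Eventually.of_forall fun x => by positivity)]
  apply ENNReal.ofReal_le_ofReal
  have hRR : -R ≤ R := by linarith
  have heval : ∫ x in Ioc (-R) R, (Real.sqrt (1 + x ^ 2))⁻¹ = 2 * Real.arsinh R := by
    rw [← intervalIntegral.integral_of_le hRR,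
      intervalIntegral.integral_eq_sub_of_hasDerivAt
        (fun x _ => Real.hasDerivAt_arsinh x) (hcont.intervalIntegrable _ _),
      Real.arsinh_neg]
    ring
  rw [heval]
  have hRpos : (0:ℝ) < R := by linarith
  have hsq : Real.sqrt (1 + R ^ 2) ≤ 2 * R := by
    have h1 : (1:ℝ) + R ^ 2 ≤ (2 * R) ^ 2 := by nlinarith
    calc Real.sqrt (1 + R ^ 2) ≤ Real.sqrt ((2 * R) ^ 2) := Real.sqrt_le_sqrt h1
      _ = 2 * R := Real.sqrt_sq (by linarith)
  have harsinh : Real.arsinh R ≤ 2 + Real.log R := by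
    have h1 : Real.arsinh R = Real.log (R + Real.sqrt (1 + R ^ 2)) := rfl
    have h2 : Real.log (R + Real.sqrt (1 + R ^ 2)) ≤ Real.log (3 * R) :=
      Real.log_le_log (by positivity) (by linarith)
    have h3 : Real.log (3 * R) = Real.log 3 + Real.log R :=
      Real.log_mul (by norm_num) (by linarith)
    have h4 : Real.log 3 ≤ 2 := by
      have := Real.log_le_sub_one_of_pos (by norm_num : (0:ℝ) < 3); linarith
    linarith [h1 ▸ h2]
  linarith

lemma image_exp_neg :
    (fun L : ℝ => Real.exp (-L)) '' Ioi 2 = Ioo 0 (Real.exp (-2)) := by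
  ext y
  constructor
  · rintro ⟨L, hL, rfl⟩
    refine ⟨Real.exp_pos _, Real.exp_lt_exp.2 ?_⟩
    simp only [mem_Ioi] at hL
    linarith
  · rintro ⟨hy0, hy2⟩
    refine ⟨-Real.log y, ?_, ?_⟩
    · have : Real.log y < -2 := (Real.log_lt_iff_lt_exp hy0).2 hy2
      simp only [mem_Ioi]; linarith
    · show Real.exp (-(-Real.log y)) = y
      rw [neg_neg, Real.exp_log hy0]

lemma final_finite :
    ∫⁻ a in Ioo (0:ℝ) (Real.exp (-2)),
      ENNReal.ofReal (96 * π * (a⁻¹ * (Real.sqrt (-Real.log a) / (-Real.log a) ^ 2))) < ⊤ := by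
  set g : ℝ → ℝ :=
    fun a => 96 * π * (a⁻¹ * (Real.sqrt (-Real.log a) / (-Real.log a) ^ 2)) with hg
  have hmeas : MeasurableSet (Ioi (2:ℝ)) := measurableSet_Ioi
  have hderiv : ∀ L ∈ Ioi (2:ℝ),
      HasDerivWithinAt (fun L : ℝ => Real.exp (-L)) (-Real.exp (-L)) (Ioi 2) L := by
    intro L _
    have h := (Real.hasDerivAt_exp (-L)).comp L ((hasDerivAt_id L).neg)
    simpa [Function.comp_def] using h.hasDerivWithinAt
  have hinj : InjOn (fun L : ℝ => Real.exp (-L)) (Ioi 2) :=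
    (Real.exp_injective.comp neg_injective).injOn
  have hInt : IntegrableOn g (Ioo 0 (Real.exp (-2))) := by
    rw [← image_exp_neg,
      integrableOn_image_iff_integrableOn_abs_deriv_smul hmeas hderiv hinj]
    have hbase : IntegrableOn (fun L : ℝ => 96 * π * L ^ (-3/2 : ℝ)) (Ioi 2) :=
      (integrableOn_Ioi_rpow_of_lt (by norm_num : (-3/2 : ℝ) < -1)
        (by norm_num : (0:ℝ) < 2)).const_mul _
    apply hbase.congr_fun _ hmeas
    intro L hL
    simp only [mem_Ioi] at hL
    have hL0 : (0:ℝ) < L := by linarith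
    have h1 : -Real.log (Real.exp (-L)) = L := by rw [Real.log_exp]; ring
    have habs : |(-Real.exp (-L))| = Real.exp (-L) := by
      rw [abs_neg, abs_of_pos (Real.exp_pos _)]
    have hinv : (Real.exp (-L))⁻¹ = Real.exp L := by
      rw [Real.exp_neg, inv_inv]
    have hrpow : L ^ (-3/2 : ℝ) = Real.sqrt L / L ^ 2 := by
      rw [Real.sqrt_eq_rpow, ← Real.rpow_natCast L 2, ← Real.rpow_sub hL0]
      norm_num
    simp only [hg, smul_eq_mul, h1, habs, hinv, hrpow]
    have hexp : Real.exp (-L) * Real.exp L = 1 := by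
      rw [← Real.exp_add]; simp
    field_simp
    linear_combination (-1 : ℝ) * hexp
  exact hInt.lintegral_lt_top
/-- The kernel on the `(x₂, a)` plane. -/
def G' (q : ℝ × ℝ) : ℝ≥0∞ :=
  ENNReal.ofReal (16 * π * ((q.2)⁻¹ / ((-Real.log q.2) ^ 2 * Real.sqrt (1 + q.1 ^ 2))))

lemma measurable_G' : Measurable G' := by
  unfold G'
  exact ENNReal.measurable_ofReal.comp ((measurable_const.mul (measurable_snd.inv.div
    (((Real.measurable_log.comp measurable_snd).neg.pow_const 2).mul
      (Real.continuous_sqrt.measurable.comp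
        (measurable_const.add (measurable_fst.pow_const 2)))))))

def T : Set (ℝ × ℝ) :=
  {q | 0 < q.2 ∧ q.2 < Real.exp (-2) ∧ |q.1| < Real.exp (Real.sqrt (-Real.log q.2))}

lemma measurable_T : MeasurableSet T := by
  refine MeasurableSet.inter ?_ (MeasurableSet.inter ?_ ?_)
  · exact measurableSet_lt measurable_const measurable_snd
  · exact measurableSet_lt measurable_snd measurable_const
  · exact measurableSet_lt (continuous_abs.measurable.comp measurable_fst)
      (Real.continuous_exp.measurable.comp (Real.continuous_sqrt.measurable.comp
        (Real.measurable_log.comp measurable_snd).neg))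

end S13

open S13 in
/-- `∫_Γ a⁻¹/(r(x)² sinh r(x)) dρ(x) < ∞` for
`Γ = {0 < a < e⁻², |x| < exp √(log a⁻¹)}`. -/
theorem stmt13 :
    ∃ C : ℝ,
      ∫⁻ p in {p : ℝ × ℝ × ℝ | 0 < p.2.2 ∧ p.2.2 < Real.exp (-2) ∧
          nm p < Real.exp (Real.sqrt (Real.log (p.2.2)⁻¹))},
        ENNReal.ofReal ((p.2.2)⁻¹ / (rD p ^ 2 * Real.sinh (rD p))) ∂ρG
        ≤ ENNReal.ofReal C := by
  classical
  set Γ : Set (ℝ × ℝ × ℝ) := {p : ℝ × ℝ × ℝ | 0 < p.2.2 ∧ p.2.2 < Real.exp (-2) ∧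
      nm p < Real.exp (Real.sqrt (Real.log (p.2.2)⁻¹))} with hΓdef
  have hΓm : MeasurableSet Γ := by
    have hdec : Γ = {p : ℝ × ℝ × ℝ | 0 < p.2.2} ∩
        ({p : ℝ × ℝ × ℝ | p.2.2 < Real.exp (-2)} ∩
         {p : ℝ × ℝ × ℝ | nm p < Real.exp (Real.sqrt (Real.log (p.2.2)⁻¹))}) := rfl
    rw [hdec]
    refine MeasurableSet.inter ?_ (MeasurableSet.inter ?_ ?_)
    · exact measurableSet_lt measurable_const measurable_a
    · exact measurableSet_lt measurable_a measurable_const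
    · exact measurableSet_lt measurable_nm
        (Real.continuous_exp.measurable.comp (Real.continuous_sqrt.measurable.comp
          (Real.measurable_log.comp measurable_a.inv)))
  set S : Set (ℝ × ℝ × ℝ) := Prod.snd ⁻¹' T with hSdef
  have hSm : MeasurableSet S := measurable_T.preimage measurable_snd
  have hΓS : Γ ⊆ S := by
    rintro p ⟨h0, h1, h2⟩
    rw [Real.log_inv] at h2
    refine ⟨h0, h1, ?_⟩
    have hx2 : |p.2.1| ≤ nm p := by
      rw [← Real.sqrt_sq_eq_abs]
      exact Real.sqrt_le_sqrt (by nlinarith [sq_nonneg p.1])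
    exact lt_of_le_of_lt hx2 h2
  have hsub : Γ ⊆ {p : ℝ × ℝ × ℝ | 0 < p.2.2} := fun p hp => hp.1
  -- the final dominating quantity
  set Z : ℝ≥0∞ := ∫⁻ a in Ioo (0:ℝ) (Real.exp (-2)),
      ENNReal.ofReal (96 * π * (a⁻¹ * (Real.sqrt (-Real.log a) / (-Real.log a) ^ 2)))
    with hZdef
  have hZ : Z ≠ ⊤ := final_finite.ne
  refine ⟨Z.toReal, ?_⟩
  rw [ENNReal.ofReal_toReal hZ]
  -- Step 1 : unfold the density
  have step1 : (∫⁻ p in Γ, ENNReal.ofReal ((p.2.2)⁻¹ / (rD p ^ 2 * Real.sinh (rD p))) ∂ρG)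
      = ∫⁻ p in Γ, ENNReal.ofReal (p.2.2)⁻¹ *
          ENNReal.ofReal ((p.2.2)⁻¹ / (rD p ^ 2 * Real.sinh (rD p))) ∂volume := by
    have hwm : Measurable fun p : ℝ × ℝ × ℝ => ENNReal.ofReal (p.2.2)⁻¹ := fun s hs =>
      (ENNReal.measurable_ofReal.comp measurable_a.inv) hs
    rw [ρG, restrict_withDensity hΓm,
      lintegral_withDensity_eq_lintegral_mul _ hwm measurable_f,
      Measure.restrict_restrict hΓm, inter_eq_self_of_subset_left hsub]
    rfl
  rw [step1]
  -- Step 2 : pointwise bound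
  have step2 : (∫⁻ p in Γ, ENNReal.ofReal (p.2.2)⁻¹ *
        ENNReal.ofReal ((p.2.2)⁻¹ / (rD p ^ 2 * Real.sinh (rD p))) ∂volume)
      ≤ ∫⁻ p in Γ, ENNReal.ofReal (bnd1 p) ∂volume := by
    refine setLIntegral_mono measurable_bnd1 fun p hp => ?_
    rw [← ENNReal.ofReal_mul (inv_nonneg.2 hp.1.le)]
    exact ENNReal.ofReal_le_ofReal (ptbound hp.1 hp.2.1)
  refine le_trans step2 ?_
  refine le_trans (lintegral_mono_set hΓS) ?_
  -- Step 4 : integrate out x₁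
  have step4 : (∫⁻ p in S, ENNReal.ofReal (bnd1 p) ∂volume) ≤ ∫⁻ q in T, G' q ∂volume := by
    rw [← lintegral_indicator hSm, ← lintegral_indicator measurable_T,
      Measure.volume_eq_prod ℝ (ℝ × ℝ),
      lintegral_prod_symm' _ (measurable_bnd1.indicator hSm)]
    refine lintegral_mono fun q => ?_
    by_cases hq : q ∈ T
    · obtain ⟨hq0, hq2, hq3⟩ := id hq
      have hL : 2 < -Real.log q.2 := by
        have := (Real.log_lt_iff_lt_exp hq0).2 hq2; linarith
      have hb20 : (0:ℝ) < 1 + q.1 ^ 2 := by positivity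
      set b : ℝ := Real.sqrt (1 + q.1 ^ 2) with hbdef
      have hb0 : 0 < b := Real.sqrt_pos.2 hb20
      have hb2 : b ^ 2 = 1 + q.1 ^ 2 := Real.sq_sqrt hb20.le
      set L : ℝ := -Real.log q.2 with hLdef
      have hL0 : (0:ℝ) < L := by linarith
      set K : ℝ := 16 * (q.2)⁻¹ / L ^ 2 with hKdef
      have hK0 : 0 ≤ K := by positivity
      have hbnd1eq : ∀ x₁ : ℝ, bnd1 (x₁, q) = K * (1 / (b ^ 2 + x₁ ^ 2)) := by
        intro x₁
        show 16 * ((q.2)⁻¹ / (L ^ 2 * (1 + (x₁ ^ 2 + q.1 ^ 2)))) = K * (1 / (b ^ 2 + x₁ ^ 2))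
        rw [hb2, hKdef]
        have h1 : L ^ 2 ≠ 0 := by positivity
        have h2 : (1:ℝ) + (x₁ ^ 2 + q.1 ^ 2) ≠ 0 := by positivity
        field_simp
        ring
      have hred : ∀ x₁ : ℝ,
          S.indicator (fun p => ENNReal.ofReal (bnd1 p)) (x₁, q)
            = ENNReal.ofReal K * ENNReal.ofReal (1 / (b ^ 2 + x₁ ^ 2)) := by
        intro x₁
        rw [indicator_of_mem (show ((x₁, q) : ℝ × ℝ × ℝ) ∈ S from hq),
          hbnd1eq x₁, ENNReal.ofReal_mul hK0]
      have hmx : Measurable fun x₁ : ℝ => ENNReal.ofReal (1 / (b ^ 2 + x₁ ^ 2)) :=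
        ENNReal.measurable_ofReal.comp
          (measurable_const.div (measurable_const.add ((measurable_id.pow_const 2))))
      calc (∫⁻ x₁ : ℝ, S.indicator (fun p => ENNReal.ofReal (bnd1 p)) (x₁, q))
          = ∫⁻ x₁ : ℝ, ENNReal.ofReal K * ENNReal.ofReal (1 / (b ^ 2 + x₁ ^ 2)) :=
            lintegral_congr hred
        _ = ENNReal.ofReal K * ENNReal.ofReal (π / b) := by
            rw [lintegral_const_mul _ hmx, lintegral_inv_sq_add_sq hb0]
        _ ≤ T.indicator G' q := by
            rw [indicator_of_mem (show q ∈ T from hq)]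
            refine le_of_eq ?_
            rw [← ENNReal.ofReal_mul hK0]
            simp only [G']
            congr 1
            rw [hKdef, hbdef, hLdef]
            have h1 : Real.sqrt (1 + q.1 ^ 2) ≠ 0 := by rw [← hbdef]; exact hb0.ne'
            have h2 : -Real.log q.2 ≠ 0 := by rw [← hLdef]; exact hL0.ne'
            field_simp
    · have hnot : ∀ x₁ : ℝ, ((x₁, q) : ℝ × ℝ × ℝ) ∉ S := fun x₁ h => hq h
      have : (∫⁻ x₁ : ℝ, S.indicator (fun p => ENNReal.ofReal (bnd1 p)) (x₁, q)) = 0 := by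
        simp only [indicator_of_notMem (hnot _)]
        simp
      rw [this, indicator_of_notMem hq]
  refine le_trans step4 ?_
  -- Step 5 : integrate out x₂
  have step5 : (∫⁻ q in T, G' q ∂volume) ≤ Z := by
    rw [hZdef, ← lintegral_indicator measurable_T, ← lintegral_indicator measurableSet_Ioo,
      Measure.volume_eq_prod ℝ ℝ,
      lintegral_prod_symm' _ (measurable_G'.indicator measurable_T)]
    refine lintegral_mono fun a => ?_
    by_cases haI : a ∈ Ioo (0:ℝ) (Real.exp (-2))
    · obtain ⟨ha0, ha2⟩ := haI
      rw [indicator_of_mem (show a ∈ Ioo (0:ℝ) (Real.exp (-2)) from ⟨ha0, ha2⟩)]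
      set L : ℝ := -Real.log a with hLdef
      have hL : 2 < L := by
        have := (Real.log_lt_iff_lt_exp ha0).2 ha2
        rw [hLdef]; linarith
      have hL0 : (0:ℝ) < L := by linarith
      have hsL : 1 ≤ Real.sqrt L := by
        rw [show (1:ℝ) = Real.sqrt 1 by simp]
        exact Real.sqrt_le_sqrt (by linarith)
      set R : ℝ := Real.exp (Real.sqrt L) with hRdef
      have hR1 : 1 ≤ R := Real.one_le_exp (Real.sqrt_nonneg _)
      set K : ℝ := 16 * π * (a⁻¹ / L ^ 2) with hKdef
      have hK0 : 0 ≤ K := by positivity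
      have hmemiff : ∀ x₂ : ℝ, (((x₂, a) : ℝ × ℝ) ∈ T) ↔ |x₂| < R :=
        fun x₂ => ⟨fun h => h.2.2, fun h => ⟨ha0, ha2, h⟩⟩
      have hGval : ∀ x₂ : ℝ, G' (x₂, a)
          = ENNReal.ofReal K * ENNReal.ofReal ((Real.sqrt (1 + x₂ ^ 2))⁻¹) := by
        intro x₂
        rw [← ENNReal.ofReal_mul hK0]
        simp only [G']
        congr 1
        rw [hKdef, hLdef]
        have h1 : Real.sqrt (1 + x₂ ^ 2) ≠ 0 := by positivity
        have h2 : -Real.log a ≠ 0 := by rw [← hLdef]; exact hL0.ne'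
        field_simp
      have hrw : ∀ x₂ : ℝ, T.indicator G' (x₂, a)
          = {x : ℝ | |x| < R}.indicator
              (fun x₂ => ENNReal.ofReal K * ENNReal.ofReal ((Real.sqrt (1 + x₂ ^ 2))⁻¹)) x₂ := by
        intro x₂
        by_cases h : |x₂| < R
        · rw [indicator_of_mem ((hmemiff x₂).2 h), indicator_of_mem (show x₂ ∈ {x : ℝ | |x| < R} from h),
            hGval x₂]
        · rw [indicator_of_notMem (fun hc => h ((hmemiff x₂).1 hc)),
            indicator_of_notMem (show x₂ ∉ {x : ℝ | |x| < R} from h)]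
      have hsetm : MeasurableSet {x : ℝ | |x| < R} :=
        measurableSet_lt continuous_abs.measurable measurable_const
      have hsub2 : {x : ℝ | |x| < R} ⊆ Ioc (-R) R :=
        fun x hx => ⟨(abs_lt.1 hx).1, (abs_lt.1 hx).2.le⟩
      have hmx2 : Measurable fun x₂ : ℝ => ENNReal.ofReal ((Real.sqrt (1 + x₂ ^ 2))⁻¹) :=
        ENNReal.measurable_ofReal.comp ((Real.continuous_sqrt.measurable.comp
          (measurable_const.add (measurable_id.pow_const 2))).inv)
      calc (∫⁻ x₂ : ℝ, T.indicator G' (x₂, a))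
          = ∫⁻ x₂ : ℝ, {x : ℝ | |x| < R}.indicator
              (fun x₂ => ENNReal.ofReal K * ENNReal.ofReal ((Real.sqrt (1 + x₂ ^ 2))⁻¹)) x₂ :=
            lintegral_congr hrw
        _ = ∫⁻ x₂ in {x : ℝ | |x| < R},
              ENNReal.ofReal K * ENNReal.ofReal ((Real.sqrt (1 + x₂ ^ 2))⁻¹) :=
            lintegral_indicator hsetm _
        _ ≤ ∫⁻ x₂ in Ioc (-R) R,
              ENNReal.ofReal K * ENNReal.ofReal ((Real.sqrt (1 + x₂ ^ 2))⁻¹) :=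
            lintegral_mono_set hsub2
        _ = ENNReal.ofReal K * ∫⁻ x₂ in Ioc (-R) R,
              ENNReal.ofReal ((Real.sqrt (1 + x₂ ^ 2))⁻¹) :=
            lintegral_const_mul _ hmx2
        _ ≤ ENNReal.ofReal K * ENNReal.ofReal (4 + 2 * Real.log R) :=
            mul_le_mul_right (lintegral_invsqrt hR1) _
        _ ≤ ENNReal.ofReal (96 * π * (a⁻¹ * (Real.sqrt (-Real.log a) / (-Real.log a) ^ 2))) := by
            rw [← ENNReal.ofReal_mul hK0]
            apply ENNReal.ofReal_le_ofReal
            rw [hRdef, Real.log_exp, ← hLdef]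
            have h6 : K * (4 + 2 * Real.sqrt L) ≤ K * (6 * Real.sqrt L) :=
              mul_le_mul_of_nonneg_left (by linarith) hK0
            refine le_trans h6 (le_of_eq ?_)
            rw [hKdef]
            ring
    · have hnot : ∀ x₂ : ℝ, ((x₂, a) : ℝ × ℝ) ∉ T := fun x₂ h => haI ⟨h.1, h.2.1⟩
      have hz : (∫⁻ x₂ : ℝ, T.indicator G' (x₂, a)) = 0 := by
        simp only [indicator_of_notMem (hnot _)]
        simp
      rw [hz, indicator_of_notMem haI]
  exact step5
end
end

section
/- Let y = (y₁,y₂,b) ∈ G and a > 0 with a ≠ b. Then the function (x₁,x₂) ↦ k₁(y⁻¹·(x₁,x₂,a)) is Lebesgue-integrable on ℝ², and ∫_{ℝ²} k₁(y⁻¹·(x₁,x₂,a)) dx₁ dx₂ = 0. -/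
open Real MeasureTheory Set

noncomputable section

lemma chD_neg (x y z : ℝ) : chD (-x, -y, z) = chD (x, y, z) := by
  simp [chD]

lemma rD_neg (x y z : ℝ) : rD (-x, -y, z) = rD (x, y, z) := by
  simp [rD, chD_neg]

lemma k1_negneg (x y z : ℝ) : k1 (-x, -y, z) = -k1 (x, y, z) := by
  unfold k1
  simp only [rD_neg]
  ring


lemma chD_ge' {c : ℝ} (u₁ u₂ : ℝ) :
    (c + c⁻¹) / 2 + (c⁻¹ / 2) * (u₁ ^ 2 + u₂ ^ 2) ≤ chD (u₁, u₂, c) := by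
  have : chD (u₁, u₂, c) = (c + c⁻¹ + c⁻¹ * (u₁ ^ 2 + u₂ ^ 2)) / 2 := rfl
  rw [this]; ring_nf; rfl

lemma exp_rD {p : ℝ × ℝ × ℝ} (h : 1 < chD p) :
    Real.exp (rD p) = chD p + Real.sqrt (chD p ^ 2 - 1) := by
  apply Real.exp_log
  have : (0:ℝ) ≤ Real.sqrt (chD p ^ 2 - 1) := Real.sqrt_nonneg _
  linarith

lemma sq_sqrt_chD {p : ℝ × ℝ × ℝ} (h : 1 < chD p) :
    (Real.sqrt (chD p ^ 2 - 1)) ^ 2 = chD p ^ 2 - 1 :=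
  Real.sq_sqrt (by nlinarith)

lemma exp_neg_rD {p : ℝ × ℝ × ℝ} (h : 1 < chD p) :
    Real.exp (-rD p) = chD p - Real.sqrt (chD p ^ 2 - 1) := by
  rw [Real.exp_neg, exp_rD h]
  have h2 := sq_sqrt_chD h
  have h0 : (0:ℝ) ≤ Real.sqrt (chD p ^ 2 - 1) := Real.sqrt_nonneg _
  have h4 : chD p + Real.sqrt (chD p ^ 2 - 1) ≠ 0 := by positivity
  field_simp
  nlinarith

lemma cosh_rD {p : ℝ × ℝ × ℝ} (h : 1 < chD p) : Real.cosh (rD p) = chD p := by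
  rw [Real.cosh_eq, exp_rD h, exp_neg_rD h]; ring

lemma sinh_rD {p : ℝ × ℝ × ℝ} (h : 1 < chD p) :
    Real.sinh (rD p) = Real.sqrt (chD p ^ 2 - 1) := by
  rw [Real.sinh_eq, exp_rD h, exp_neg_rD h]; ring

lemma rD_pos {p : ℝ × ℝ × ℝ} (h : 1 < chD p) : 0 < rD p := by
  apply Real.log_pos
  have : (0:ℝ) ≤ Real.sqrt (chD p ^ 2 - 1) := Real.sqrt_nonneg _
  linarith

lemma chD_c (u₁ u₂ c : ℝ) : chD (u₁, u₂, c) = (c + c⁻¹ + c⁻¹ * (u₁ ^ 2 + u₂ ^ 2)) / 2 := rfl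

lemma K_gt_one {c : ℝ} (hc : 0 < c) (hc1 : c ≠ 1) : 1 < (c + c⁻¹) / 2 := by
  have h1 : c * c⁻¹ = 1 := mul_inv_cancel₀ hc.ne'
  have h2 : (0:ℝ) < (c - 1) ^ 2 := by
    have : c - 1 ≠ 0 := sub_ne_zero.mpr hc1
    positivity
  have h3 : 0 < c⁻¹ := inv_pos.mpr hc
  nlinarith

lemma chD_eq {c : ℝ} (u₁ u₂ : ℝ) :
    chD (u₁, u₂, c) = (c + c⁻¹) / 2 + (c⁻¹ / 2) * (u₁ ^ 2 + u₂ ^ 2) := by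
  rw [chD_c]; ring

set_option maxHeartbeats 1000000 in
lemma k1_bound {c : ℝ} (hc : 0 < c) (hc1 : c ≠ 1) :
    ∃ C : ℝ, 0 < C ∧ ∀ u₁ u₂ : ℝ,
      |k1 (u₁, u₂, c)| ≤
        C / (Real.sqrt (1 + (c⁻¹ / 2) * (u₁ ^ 2 + u₂ ^ 2))) ^ 3 := by
  have hci : 0 < c⁻¹ := inv_pos.mpr hc
  obtain ⟨α, hα⟩ : ∃ α : ℝ, α = c⁻¹ / 2 := ⟨_, rfl⟩
  have hαpos : 0 < α := by rw [hα]; positivity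
  obtain ⟨K, hK⟩ : ∃ K : ℝ, K = (c + c⁻¹) / 2 := ⟨_, rfl⟩
  have hK1 : 1 < K := hK ▸ K_gt_one hc hc1
  have hKpos : 0 < K := by linarith
  obtain ⟨r₀, hr₀⟩ : ∃ r₀ : ℝ, r₀ = Real.log K := ⟨_, rfl⟩
  have hr₀pos : 0 < r₀ := hr₀ ▸ Real.log_pos hK1
  obtain ⟨M₀, hM₀⟩ : ∃ M₀ : ℝ, M₀ = 1 / r₀ + 1 / r₀ ^ 2 := ⟨_, rfl⟩
  have hM₀pos : 0 < M₀ := by rw [hM₀]; positivity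
  obtain ⟨δ, hδ⟩ : ∃ δ : ℝ, δ = Real.sqrt (1 - 1 / K ^ 2) := ⟨_, rfl⟩
  have hKK : (1:ℝ) - 1 / K ^ 2 > 0 := by
    have : 1 < K ^ 2 := one_lt_pow₀ hK1 two_ne_zero
    have hK2 : (0:ℝ) < K ^ 2 := by positivity
    rw [gt_iff_lt, sub_pos, div_lt_one hK2]
    exact this
  have hδpos : 0 < δ := hδ ▸ Real.sqrt_pos.mpr hKK
  have hδ2 : δ ^ 2 = 1 - 1 / K ^ 2 := by rw [hδ]; exact Real.sq_sqrt hKK.le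
  obtain ⟨X, hX⟩ : ∃ X : ℝ, X = (2 * Real.pi ^ 2)⁻¹ * c⁻¹ := ⟨_, rfl⟩
  have hπ : (0:ℝ) < Real.pi := Real.pi_pos
  have hXpos : 0 < X := by rw [hX]; positivity
  obtain ⟨sa, hsadef⟩ : ∃ sa : ℝ, sa = Real.sqrt α := ⟨_, rfl⟩
  have hsa : 0 < sa := hsadef ▸ Real.sqrt_pos.mpr hαpos
  refine ⟨X * M₀ / (sa * δ ^ 3), by positivity, fun u₁ u₂ => ?_⟩
  rw [← hα]
  obtain ⟨t, ht⟩ : ∃ t : ℝ, t = chD (u₁, u₂, c) := ⟨_, rfl⟩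
  have htKα : t = K + α * (u₁ ^ 2 + u₂ ^ 2) := by rw [ht, chD_eq, hK, hα]
  have hUnn : (0:ℝ) ≤ u₁ ^ 2 + u₂ ^ 2 := by positivity
  have htK : K ≤ t := by
    have h := mul_nonneg hαpos.le hUnn; linarith
  have ht1 : 1 < t := lt_of_lt_of_le hK1 htK
  have htpos : 0 < t := by linarith
  have htα : 1 + α * (u₁ ^ 2 + u₂ ^ 2) ≤ t := by linarith
  obtain ⟨r, hrdef⟩ : ∃ r : ℝ, r = rD (u₁, u₂, c) := ⟨_, rfl⟩
  have hrpos : 0 < r := hrdef ▸ rD_pos (ht ▸ ht1)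
  obtain ⟨s, hs⟩ : ∃ s : ℝ, s = Real.sqrt (t ^ 2 - 1) := ⟨_, rfl⟩
  have ht2 : 1 < t ^ 2 := one_lt_pow₀ ht1 two_ne_zero
  have hs2 : s ^ 2 = t ^ 2 - 1 := by rw [hs]; exact Real.sq_sqrt (by linarith)
  have hspos : 0 < s := by rw [hs]; exact Real.sqrt_pos.mpr (by linarith)
  have hcosh : Real.cosh r = t := by rw [hrdef, cosh_rD (ht ▸ ht1), ← ht]
  have hsinh : Real.sinh r = s := by rw [hrdef, sinh_rD (ht ▸ ht1), hs, ht]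
  -- r ≥ r₀
  have hrr₀ : r₀ ≤ r := by
    have hKc : K ≤ chD (u₁, u₂, c) := ht ▸ htK
    have h0 : (0:ℝ) ≤ Real.sqrt (chD (u₁, u₂, c) ^ 2 - 1) := Real.sqrt_nonneg _
    rw [hr₀, hrdef, rD]
    apply Real.log_le_log hKpos
    linarith
  -- s ≤ t
  have hst : s ≤ t := by
    rw [hs]
    calc Real.sqrt (t ^ 2 - 1) ≤ Real.sqrt (t ^ 2) := Real.sqrt_le_sqrt (by linarith)
      _ = t := Real.sqrt_sq htpos.le
  -- δ t ≤ s
  have hδt : δ * t ≤ s := by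
    have h1 : (δ * t) ^ 2 ≤ s ^ 2 := by
      have hK2t : K ^ 2 ≤ t ^ 2 := pow_le_pow_left₀ hKpos.le htK 2
      have hK2pos : (0:ℝ) < K ^ 2 := by positivity
      have : t ^ 2 / K ^ 2 ≥ 1 := by
        rw [ge_iff_le, le_div_iff₀ hK2pos]; linarith
      have hexp : (δ * t) ^ 2 = t ^ 2 - t ^ 2 / K ^ 2 := by
        rw [mul_pow, hδ2]; field_simp
      rw [hexp, hs2]; linarith
    have hδt0 : 0 ≤ δ * t := (mul_pos hδpos htpos).le
    calc δ * t = Real.sqrt ((δ * t) ^ 2) := (Real.sqrt_sq hδt0).symm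
      _ ≤ Real.sqrt (s ^ 2) := Real.sqrt_le_sqrt h1
      _ = s := Real.sqrt_sq hspos.le
  -- 1 + r ≤ M₀ r²
  have hrM : 1 + r ≤ M₀ * r ^ 2 := by
    have key : (1 + r) * r₀ ^ 2 ≤ (r₀ + 1) * r ^ 2 := by
      have e : (r₀ + 1) * r ^ 2 - (1 + r) * r₀ ^ 2 =
          (r - r₀) * (r + r₀) + r₀ * r * (r - r₀) := by ring
      have t1 : 0 ≤ (r - r₀) * (r + r₀) :=
        mul_nonneg (sub_nonneg.mpr hrr₀) (by linarith)
      have t2 : 0 ≤ r₀ * r * (r - r₀) :=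
        mul_nonneg (mul_nonneg hr₀pos.le hrpos.le) (sub_nonneg.mpr hrr₀)
      linarith
    have hM₀eq : M₀ = (r₀ + 1) / r₀ ^ 2 := by rw [hM₀]; field_simp
    rw [hM₀eq, div_mul_eq_mul_div, le_div_iff₀ (by positivity)]
    linarith [key]
  -- |u₁| ≤ √t / √α
  obtain ⟨st, hstdef⟩ : ∃ st : ℝ, st = Real.sqrt t := ⟨_, rfl⟩
  have hstpos : 0 < st := hstdef ▸ Real.sqrt_pos.mpr htpos
  have hst2 : st ^ 2 = t := by rw [hstdef]; exact Real.sq_sqrt htpos.le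
  have hu1 : |u₁| ≤ st / sa := by
    have h1 : u₁ ^ 2 ≤ t / α := by
      rw [le_div_iff₀ hαpos]
      have h2 := mul_nonneg hαpos.le (sq_nonneg u₂)
      have h3 : α * (u₁ ^ 2 + u₂ ^ 2) = α * u₁ ^ 2 + α * u₂ ^ 2 := by ring
      have h4 : u₁ ^ 2 * α = α * u₁ ^ 2 := by ring
      linarith [htα]
    rw [hstdef, hsadef]
    calc |u₁| = Real.sqrt (u₁ ^ 2) := (Real.sqrt_sq_eq_abs u₁).symm
      _ ≤ Real.sqrt (t / α) := Real.sqrt_le_sqrt h1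
      _ = Real.sqrt t / Real.sqrt α := Real.sqrt_div htpos.le α
  -- expression for |k1|
  have hk1eq : k1 (u₁, u₂, c) = -X * u₁ * (s + r * t) / (r ^ 2 * s ^ 3) := by
    have e : k1 (u₁, u₂, c) = -(2 * Real.pi ^ 2)⁻¹ * c⁻¹ * u₁ *
        (Real.sinh (rD (u₁, u₂, c)) + rD (u₁, u₂, c) * Real.cosh (rD (u₁, u₂, c))) /
        ((rD (u₁, u₂, c)) ^ 2 * Real.sinh (rD (u₁, u₂, c)) ^ 3) := rfl
    rw [e, ← hrdef, hcosh, hsinh, hX]; ring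
  have hnum : (0:ℝ) < s + r * t := by positivity
  have hden : (0:ℝ) < r ^ 2 * s ^ 3 := by positivity
  have habs : |k1 (u₁, u₂, c)| = X * |u₁| * (s + r * t) / (r ^ 2 * s ^ 3) := by
    rw [hk1eq, abs_div, abs_mul, abs_mul, abs_of_pos hden, abs_of_pos hnum]
    have : |(-X)| = X := by rw [abs_neg, abs_of_pos hXpos]
    rw [this]
  rw [habs]
  have hnum' : X * |u₁| * (s + r * t) ≤ X * (st / sa) * (M₀ * r ^ 2 * t) := by
    have hA1 : s + r * t ≤ M₀ * r ^ 2 * t := by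
      have h1 : s + r * t ≤ (1 + r) * t := by
        have : (1 + r) * t = t + r * t := by ring
        rw [this]; linarith
      have h2 := mul_le_mul_of_nonneg_right hrM htpos.le
      linarith
    have h3 : X * |u₁| ≤ X * (st / sa) :=
      mul_le_mul_of_nonneg_left hu1 hXpos.le
    have h4 : (0:ℝ) ≤ X * (st / sa) := by positivity
    exact mul_le_mul h3 hA1 hnum.le h4
  have hden' : r ^ 2 * (δ * t) ^ 3 ≤ r ^ 2 * s ^ 3 := by
    exact mul_le_mul_of_nonneg_left (pow_le_pow_left₀ (by positivity) hδt 3) (sq_nonneg r)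
  have hden'pos : (0:ℝ) < r ^ 2 * (δ * t) ^ 3 := by positivity
  have hmain : X * |u₁| * (s + r * t) / (r ^ 2 * s ^ 3) ≤
      X * (st / sa) * (M₀ * r ^ 2 * t) / (r ^ 2 * (δ * t) ^ 3) :=
    div_le_div₀ (by positivity) hnum' hden'pos hden'
  have hmid : X * (st / sa) * (M₀ * r ^ 2 * t) / (r ^ 2 * (δ * t) ^ 3) =
      X * M₀ / (sa * δ ^ 3) / st ^ 3 := by
    have ht' : t = st ^ 2 := hst2.symm
    rw [ht']
    field_simp
  rw [hmid] at hmain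
  refine le_trans hmain ?_
  -- C / st^3 ≤ C / w^3 with w = sqrt(1 + α U) ≤ st
  have hw : Real.sqrt (1 + α * (u₁ ^ 2 + u₂ ^ 2)) ≤ st := by
    rw [hstdef]; exact Real.sqrt_le_sqrt htα
  have hwpos : 0 < Real.sqrt (1 + α * (u₁ ^ 2 + u₂ ^ 2)) :=
    Real.sqrt_pos.mpr (by positivity)
  apply div_le_div_of_nonneg_left (by positivity) (by positivity)
  exact pow_le_pow_left₀ hwpos.le hw 3

lemma chD_gt_one {c : ℝ} (hc : 0 < c) (hc1 : c ≠ 1) (u₁ u₂ : ℝ) :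
    1 < chD (u₁, u₂, c) := by
  have h1 := K_gt_one hc hc1
  have h2 := chD_ge' (c := c) u₁ u₂
  have h3 : 0 < c⁻¹ := inv_pos.mpr hc
  nlinarith [sq_nonneg u₁, sq_nonneg u₂]

set_option maxHeartbeats 800000 in
lemma quad_comp (α bi y₁ y₂ : ℝ) (hα : 0 < α) (hbi : 0 < bi) :
    ∃ ε : ℝ, 0 < ε ∧ ∀ q : ℝ × ℝ,
      ε * (1 + ‖q‖) ^ 2 ≤ 1 + α * ((bi * (q.1 - y₁)) ^ 2 + (bi * (q.2 - y₂)) ^ 2) := by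
  set β : ℝ := α * bi ^ 2 / 2 with hβ
  have hβpos : 0 < β := by positivity
  set β' : ℝ := min 1 β with hβ'
  have hβ'pos : 0 < β' := lt_min one_pos hβpos
  set M : ℝ := α * bi ^ 2 * (y₁ ^ 2 + y₂ ^ 2) with hM
  have hMnn : 0 ≤ M := by positivity
  refine ⟨β' / (2 * (1 + M)), by positivity, fun q => ?_⟩
  have hN : 0 ≤ ‖q‖ := norm_nonneg q
  have hN2 : ‖q‖ ^ 2 ≤ q.1 ^ 2 + q.2 ^ 2 := by
    have h1 : ‖q‖ = max ‖q.1‖ ‖q.2‖ := rfl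
    have h2 : ‖q.1‖ = |q.1| := rfl
    have h3 : ‖q.2‖ = |q.2| := rfl
    rw [h1, h2, h3]
    rcases max_cases |q.1| |q.2| with ⟨h, _⟩ | ⟨h, _⟩ <;> rw [h] <;>
      nlinarith [sq_abs q.1, sq_abs q.2, sq_nonneg q.1, sq_nonneg q.2]
  have hQnn : 0 ≤ q.1 ^ 2 + q.2 ^ 2 := by positivity
  have hk : q.1 ^ 2 / 2 - y₁ ^ 2 + (q.2 ^ 2 / 2 - y₂ ^ 2) ≤ (q.1 - y₁) ^ 2 + (q.2 - y₂) ^ 2 := by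
    nlinarith [sq_nonneg (q.1 - 2 * y₁), sq_nonneg (q.2 - 2 * y₂)]
  have hab2 : 0 ≤ α * bi ^ 2 := by positivity
  have hk' := mul_le_mul_of_nonneg_left hk hab2
  have step1 : (1 + ‖q‖) ^ 2 ≤ 2 * (1 + (q.1 ^ 2 + q.2 ^ 2)) := by
    nlinarith [sq_nonneg (1 - ‖q‖)]
  have step1' := mul_le_mul_of_nonneg_left step1 hβ'pos.le
  have h1 : β' ≤ 1 := min_le_left _ _
  have h2 : β' ≤ β := min_le_right _ _
  have h2' := mul_le_mul_of_nonneg_right h2 hQnn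
  -- step2 : β' * (1 + Q) ≤ 1 + β * Q  (linear from h1, h2')
  set U : ℝ := (bi * (q.1 - y₁)) ^ 2 + (bi * (q.2 - y₂)) ^ 2 with hU
  have hUnn : 0 ≤ U := by positivity
  have hu : β * (q.1 ^ 2 + q.2 ^ 2) ≤ α * U + M := by
    rw [hM, hβ, hU]
    nlinarith [hk']
  have hMU : 0 ≤ M * (α * U) := by positivity
  -- (1+M)(1+αU) = 1 + αU + M + M(αU)
  rw [div_mul_eq_mul_div, div_le_iff₀ (by positivity)]
  nlinarith [step1', h2', hu, hMU]

/-- continuity of the shifted kernel. -/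
lemma k1_cont {c : ℝ} (hc : 0 < c) (hc1 : c ≠ 1) (bi y₁ y₂ : ℝ) :
    Continuous fun q : ℝ × ℝ => k1 (bi * (q.1 - y₁), bi * (q.2 - y₂), c) := by
  have hch : Continuous fun q : ℝ × ℝ =>
      chD (bi * (q.1 - y₁), bi * (q.2 - y₂), c) := by
    simp only [chD]
    fun_prop
  have hchpos : ∀ q : ℝ × ℝ, 1 < chD (bi * (q.1 - y₁), bi * (q.2 - y₂), c) :=
    fun q => chD_gt_one hc hc1 _ _
  have hrd : Continuous fun q : ℝ × ℝ =>
      rD (bi * (q.1 - y₁), bi * (q.2 - y₂), c) := by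
    simp only [rD]
    apply Continuous.log
    · exact hch.add ((hch.pow 2).sub continuous_const).sqrt
    · intro q
      have := hchpos q
      have := Real.sqrt_nonneg ((chD (bi * (q.1 - y₁), bi * (q.2 - y₂), c)) ^ 2 - 1)
      positivity
  have hrdpos : ∀ q : ℝ × ℝ, 0 < rD (bi * (q.1 - y₁), bi * (q.2 - y₂), c) :=
    fun q => rD_pos (hchpos q)
  simp only [k1]
  apply Continuous.div
  · fun_prop
  · fun_prop
  · intro q
    have h1 := hrdpos q
    have h2 : 0 < Real.sinh (rD (bi * (q.1 - y₁), bi * (q.2 - y₂), c)) :=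
      Real.sinh_pos_iff.mpr h1
    positivity

/-- Master bound in `q` coordinates. -/
lemma k1_master {c : ℝ} (hc : 0 < c) (hc1 : c ≠ 1) (bi y₁ y₂ : ℝ) (hbi : 0 < bi) :
    ∃ C : ℝ, 0 < C ∧ ∀ q : ℝ × ℝ,
      |k1 (bi * (q.1 - y₁), bi * (q.2 - y₂), c)| ≤ C * (1 + ‖q‖) ^ (-3 : ℝ) := by
  obtain ⟨C, hC, hbd⟩ := k1_bound hc hc1
  have hαpos : 0 < c⁻¹ / 2 := by positivity
  obtain ⟨ε, hεpos, hcomp⟩ := quad_comp (c⁻¹ / 2) bi y₁ y₂ hαpos hbi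
  have hsε : 0 < Real.sqrt ε := Real.sqrt_pos.mpr hεpos
  refine ⟨C / (Real.sqrt ε) ^ 3, by positivity, fun q => ?_⟩
  have hN : 0 ≤ ‖q‖ := norm_nonneg q
  set u₁ : ℝ := bi * (q.1 - y₁)
  set u₂ : ℝ := bi * (q.2 - y₂)
  have h1 : Real.sqrt ε * (1 + ‖q‖) ≤ Real.sqrt (1 + c⁻¹ / 2 * (u₁ ^ 2 + u₂ ^ 2)) := by
    have := Real.sqrt_le_sqrt (hcomp q)
    rwa [Real.sqrt_mul hεpos.le, Real.sqrt_sq (by linarith)] at this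
  have hL : 0 < Real.sqrt ε * (1 + ‖q‖) := by positivity
  have h3 : (Real.sqrt ε * (1 + ‖q‖)) ^ 3 ≤
      (Real.sqrt (1 + c⁻¹ / 2 * (u₁ ^ 2 + u₂ ^ 2))) ^ 3 :=
    pow_le_pow_left₀ hL.le h1 3
  have h4 : C / (Real.sqrt (1 + c⁻¹ / 2 * (u₁ ^ 2 + u₂ ^ 2))) ^ 3 ≤
      C / (Real.sqrt ε * (1 + ‖q‖)) ^ 3 :=
    div_le_div_of_nonneg_left hC.le (by positivity) h3
  have h5 : C / (Real.sqrt ε * (1 + ‖q‖)) ^ 3 =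
      C / (Real.sqrt ε) ^ 3 * (1 + ‖q‖) ^ (-3 : ℝ) := by
    rw [Real.rpow_neg (by linarith),
      show (1 + ‖q‖) ^ (3:ℝ) = (1 + ‖q‖) ^ (3:ℕ) by rw [← Real.rpow_natCast]; norm_num,
      mul_pow, div_mul_eq_div_div, div_eq_mul_inv (C / Real.sqrt ε ^ 3)]
  exact le_trans (hbd u₁ u₂) (h4.trans_eq h5)


/-- for fixed `y ∈ G` and `a ≠ b`, the function
`(x₁,x₂) ↦ k₁(y⁻¹ (x₁,x₂,a))` is integrable on `ℝ²` with vanishing integral. -/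
theorem stmt15 (y₁ y₂ b a : ℝ) (hb : 0 < b) (ha : 0 < a) (hab : a ≠ b) :
    Integrable (fun q : ℝ × ℝ => k1 (b⁻¹ * (q.1 - y₁), b⁻¹ * (q.2 - y₂), a / b))
      (volume : Measure (ℝ × ℝ)) ∧
    ∫ q : ℝ × ℝ, k1 (b⁻¹ * (q.1 - y₁), b⁻¹ * (q.2 - y₂), a / b) = 0 := by
  have hc : 0 < a / b := div_pos ha hb
  have hc1 : a / b ≠ 1 := by
    intro h
    apply hab
    rw [div_eq_iff hb.ne'] at h
    linarith
  have hbi : (0:ℝ) < b⁻¹ := inv_pos.mpr hb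
  have hcont := k1_cont hc hc1 b⁻¹ y₁ y₂
  obtain ⟨C, hC, hdom⟩ := k1_master hc hc1 b⁻¹ y₁ y₂ hbi
  have hgint : Integrable (fun q : ℝ × ℝ => C * (1 + ‖q‖) ^ (-3 : ℝ)) volume :=
    (integrable_one_add_norm (by simp; norm_num)).const_mul C
  have hint : Integrable (fun q : ℝ × ℝ => k1 (b⁻¹ * (q.1 - y₁), b⁻¹ * (q.2 - y₂), a / b))
      volume := by
    refine hgint.mono' hcont.aestronglyMeasurable ?_
    exact Filter.Eventually.of_forall hdom
  refine ⟨hint, ?_⟩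
  set f : ℝ × ℝ → ℝ := fun q => k1 (b⁻¹ * (q.1 - y₁), b⁻¹ * (q.2 - y₂), a / b) with hfdef
  have hodd : ∀ q : ℝ × ℝ, f ((2 * y₁, 2 * y₂) - q) = -f q := by
    intro q
    have e1 : b⁻¹ * (((2 * y₁, 2 * y₂) - q : ℝ × ℝ).1 - y₁) = -(b⁻¹ * (q.1 - y₁)) := by
      simp [Prod.fst_sub]; ring
    have e2 : b⁻¹ * (((2 * y₁, 2 * y₂) - q : ℝ × ℝ).2 - y₂) = -(b⁻¹ * (q.2 - y₂)) := by
      simp [Prod.snd_sub]; ring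
    show k1 _ = -k1 _
    rw [e1, e2]
    exact k1_negneg _ _ _
  have hsub : ∫ q : ℝ × ℝ, f ((2 * y₁, 2 * y₂) - q) = ∫ q, f q :=
    integral_sub_left_eq_self f volume ((2 * y₁, 2 * y₂) : ℝ × ℝ)
  have hfin : ∫ q : ℝ × ℝ, f q = - ∫ q : ℝ × ℝ, f q := by
    conv_lhs => rw [← hsub]
    simp_rw [hodd]
    exact integral_neg f
  linarith [hfin]
end
end

section
/- There exist constants 0 < c ≤ C < ∞ such that for every z = (z₁,z₂,d) ∈ G with d > 2 one has: c log((d² + |z|²)/d) ≤ r(z) ≤ C log((d² + |z|²)/d); and | 2π² k₁(z) + 4 d z₁ (1 + r(z)) / (r(z)² (d² + |z|²)²) | ≤ C d |z₁| (1 + r(z)) / (r(z)² (d² + |z|²)³). -/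
open Real MeasureTheory Set

noncomputable section

set_option maxHeartbeats 1000000 in
/-- asymptotics of `r(z)` and `k₁(z)` when `d > 2`. -/
theorem stmt17 :
    ∃ c C : ℝ, 0 < c ∧ c ≤ C ∧
      ∀ z : ℝ × ℝ × ℝ, 2 < z.2.2 →
        (c * Real.log ((z.2.2 ^ 2 + nm z ^ 2) / z.2.2) ≤ rD z ∧
          rD z ≤ C * Real.log ((z.2.2 ^ 2 + nm z ^ 2) / z.2.2)) ∧
        |2 * Real.pi ^ 2 * k1 z +
            4 * z.2.2 * z.1 * (1 + rD z) / (rD z ^ 2 * (z.2.2 ^ 2 + nm z ^ 2) ^ 2)| ≤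
          C * z.2.2 * |z.1| * (1 + rD z) / (rD z ^ 2 * (z.2.2 ^ 2 + nm z ^ 2) ^ 3) := by
  refine ⟨1/2, 1796, by norm_num, by norm_num, ?_⟩
  rintro ⟨z1, z2, d⟩ hd
  dsimp only at hd ⊢
  have hd0 : (0:ℝ) < d := by linarith
  have hs : (0:ℝ) ≤ z1 ^ 2 + z2 ^ 2 := by positivity
  have hnm : nm (z1, z2, d) ^ 2 = z1 ^ 2 + z2 ^ 2 := by
    simp only [nm]; exact Real.sq_sqrt hs
  rw [hnm]
  obtain ⟨S, hSdef⟩ : ∃ S : ℝ, S = d ^ 2 + (z1 ^ 2 + z2 ^ 2) := ⟨_, rfl⟩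
  rw [← hSdef]
  have hS4 : (4:ℝ) < S := by rw [hSdef]; nlinarith only [hd, hs]
  have hS0 : (0:ℝ) < S := by linarith
  have hd2S : d ^ 2 ≤ S := by rw [hSdef]; linarith only [hs]
  obtain ⟨Y, hYdef⟩ : ∃ Y : ℝ, Y = (S + 1) / (2 * d) := ⟨_, rfl⟩
  have hch : chD (z1, z2, d) = Y := by
    simp only [chD]; rw [hYdef, hSdef]; field_simp; ring
  have hY1 : 1 < Y := by
    rw [hYdef, lt_div_iff₀ (by positivity)]; nlinarith only [hd2S, hd, hd0]
  have hY0 : (0:ℝ) < Y := by linarith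
  have hYsq : (0:ℝ) ≤ Y ^ 2 - 1 := by nlinarith only [hY1]
  obtain ⟨W, hWdef⟩ : ∃ W : ℝ, W = Real.sqrt (Y ^ 2 - 1) := ⟨_, rfl⟩
  have hW0 : (0:ℝ) ≤ W := hWdef ▸ Real.sqrt_nonneg _
  have hWsq : W ^ 2 = Y ^ 2 - 1 := by rw [hWdef]; exact Real.sq_sqrt hYsq
  have hWpos : (0:ℝ) < W := by rw [hWdef]; exact Real.sqrt_pos.mpr (by nlinarith only [hY1])
  obtain ⟨r, hrdef⟩ : ∃ r : ℝ, r = rD (z1, z2, d) := ⟨_, rfl⟩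
  rw [← hrdef]
  have hrlog : r = Real.log (Y + W) := by
    rw [hrdef]; simp only [rD]; rw [hch, ← hWdef]
  have huv : (0:ℝ) < Y + W := by linarith
  have hr0 : (0:ℝ) < r := by rw [hrlog]; exact Real.log_pos (by linarith)
  have hexp : Real.exp r = Y + W := by rw [hrlog, Real.exp_log huv]
  have hmul1 : (Y + W) * (Y - W) = 1 := by linear_combination -hWsq
  have hexpneg : Real.exp (-r) = Y - W := by
    rw [Real.exp_neg, hexp]
    exact inv_eq_of_mul_eq_one_right hmul1
  have hcosh : Real.cosh r = Y := by
    rw [Real.cosh_eq, hexp, hexpneg]; ring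
  have hsinh : Real.sinh r = W := by
    rw [Real.sinh_eq, hexp, hexpneg]; ring
  have h2dY : 2 * d * Y = S + 1 := by rw [hYdef]; field_simp
  have hWid : 4 * d ^ 2 * W ^ 2 = (S + 1) ^ 2 - 4 * d ^ 2 := by
    rw [hWsq]; linear_combination (2 * d * Y + (S + 1)) * h2dY
  have hSW : S ^ 2 ≤ 16 * d ^ 2 * W ^ 2 := by nlinarith only [hWid, hd2S, hS4]
  have hdW0 : (0:ℝ) ≤ d * W := by positivity
  have hSplus : (0:ℝ) < S + 4 * d * W := by linarith
  have hSle : S ≤ 4 * d * W := by nlinarith only [hSW, hSplus, hS0, hdW0]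
  have hWub : 2 * d * W ≤ S + 1 := by
    nlinarith only [hWid, mul_pos hd0 hd0, hdW0, hS0]
  have hdY : d * Y ≤ S := by linarith only [h2dY, hS4]
  constructor
  · constructor
    · -- lower bound for r
      have hY54 : (5:ℝ)/4 ≤ Y := by
        rw [hYdef, le_div_iff₀ (by positivity)]
        nlinarith only [mul_nonneg (by linarith : (0:ℝ) ≤ 2*d - 1) (by linarith : (0:ℝ) ≤ d - 2), hd2S]
      have hW35 : 3/5 * Y ≤ W := by
        have h1 : (3/5 * Y) ^ 2 ≤ Y ^ 2 - 1 := by nlinarith only [hY54, hY0]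
        have h2 := Real.sqrt_le_sqrt h1
        rw [Real.sqrt_sq (by positivity)] at h2
        rw [← hWdef] at h2; exact h2
      have ha1 : (8/5 * Y) ^ 2 ≤ (Y + W) ^ 2 := by nlinarith only [sq_nonneg (W - 3/5 * Y), mul_nonneg (sub_nonneg.mpr hW35) hY0.le]
      have hsq2dY : 4 * d ^ 2 * Y ^ 2 = (S + 1) ^ 2 := by
        linear_combination (2 * d * Y + (S + 1)) * h2dY
      have h16S : (0:ℝ) ≤ 16 * S - 25 * d := by nlinarith only [hd2S, hd, hd0]
      have ha2 : 4 * d * S ≤ 4 * d ^ 2 * (Y + W) ^ 2 := by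
        nlinarith only [mul_le_mul_of_nonneg_left ha1 (show (0:ℝ) ≤ 4 * d ^ 2 by positivity),
          hsq2dY, mul_nonneg hS0.le h16S, hS0, hd0]
      have hQle : S / d ≤ (Y + W) ^ 2 := by
        rw [div_le_iff₀ hd0]; nlinarith only [ha2, hd0, sq_nonneg (Y + W)]
      have hlog : Real.log (S / d) ≤ Real.log ((Y + W) ^ 2) := by
        apply Real.log_le_log (by positivity) hQle
      rw [Real.log_pow] at hlog
      push_cast at hlog
      rw [hrlog]
      linarith
    · -- upper bound for r
      have hWleY : W ≤ Y := by nlinarith only [hWsq, hW0, hY0]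
      have h2dS : 2 * d < S := by nlinarith only [hd2S, hd, hd0]
      have hd2Y2 : 2 * Y * d ^ 2 = d * (S + 1) := by linear_combination d * h2dY
      have hkey : Y + W ≤ (S / d) ^ 2 := by
        rw [div_pow, le_div_iff₀ (by positivity)]
        nlinarith only [hWleY, hd2Y2, mul_lt_mul_of_pos_right h2dS hS0, h2dS, hS4,
          mul_nonneg (sq_nonneg d) (by linarith : (0:ℝ) ≤ Y - W)]
      have hlog : Real.log (Y + W) ≤ Real.log ((S / d) ^ 2) := by
        apply Real.log_le_log huv hkey
      rw [Real.log_pow] at hlog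
      push_cast at hlog
      have hlogQ0 : (0:ℝ) ≤ Real.log (S / d) := by
        apply Real.log_nonneg
        rw [le_div_iff₀ hd0]; nlinarith only [hd2S, hd, hd0]
      rw [hrlog]
      linarith
  · -- kernel estimate
    have hk : 2 * Real.pi ^ 2 * k1 (z1, z2, d) + 4 * d * z1 * (1 + r) / (r ^ 2 * S ^ 2)
        = z1 / (d * r ^ 2) * (4 * d ^ 2 * (1 + r) / S ^ 2 - (W + r * Y) / W ^ 3) := by
      simp only [k1]
      rw [← hrdef, hsinh, hcosh]
      have hpi := Real.pi_ne_zero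
      field_simp
      ring
    rw [hk, abs_mul,
      show |z1 / (d * r ^ 2)| = |z1| / (d * r ^ 2) by
        rw [abs_div, abs_of_pos (show (0:ℝ) < d * r ^ 2 by positivity)]]
    have hprod : (S - 2 * d * W) * (S + 2 * d * W) = 4 * d ^ 2 - 2 * S - 1 := by
      linear_combination -hWid
    have h2dWS : (0:ℝ) < S + 2 * d * W := by linarith
    have hSm : |S - 2 * d * W| ≤ 4 := by
      rw [abs_le]; constructor
      · nlinarith only [hprod, hd2S, hS4, hdW0, h2dWS, mul_pos hd0 hd0]
      · nlinarith only [hprod, hd2S, hS4, hdW0, h2dWS, mul_pos hd0 hd0]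
    have h4d2W2 : 4 * d ^ 2 * W ^ 2 ≤ (S + 1) ^ 2 := by
      linarith only [hWid, sq_nonneg d]
    have hquad : S ^ 2 + 2 * d * S * W + 4 * d ^ 2 * W ^ 2 ≤ 7 * S ^ 2 := by
      nlinarith only [mul_le_mul_of_nonneg_left hWub hS0.le, h4d2W2, hS4, hS0,
        mul_pos hS0 hS0]
    have hquad0 : (0:ℝ) < S ^ 2 + 2 * d * S * W + 4 * d ^ 2 * W ^ 2 := by positivity
    have hScube : S ^ 3 ≤ 64 * d ^ 3 * W ^ 3 := by
      calc S ^ 3 ≤ (4 * d * W) ^ 3 := pow_le_pow_left₀ hS0.le hSle 3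
        _ = 64 * d ^ 3 * W ^ 3 := by ring
    have ha : |4 * d ^ 2 * S * W ^ 3 - W * S ^ 3| ≤ 64 * d ^ 2 * W ^ 3 := by
      have hfa : 4 * d ^ 2 * S * W ^ 3 - W * S ^ 3 = W * S * (2 * S + 1 - 4 * d ^ 2) := by
        linear_combination W * S * hWid
      rw [hfa, abs_mul, abs_of_nonneg (by positivity : (0:ℝ) ≤ W * S)]
      have h4S : |2 * S + 1 - 4 * d ^ 2| ≤ 4 * S :=
        abs_le.mpr ⟨by linarith only [hd2S, hS0], by linarith only [hS4, sq_nonneg d]⟩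
      calc W * S * |2 * S + 1 - 4 * d ^ 2| ≤ W * S * (4 * S) :=
            mul_le_mul_of_nonneg_left h4S (by positivity)
        _ ≤ 64 * d ^ 2 * W ^ 3 := by
            nlinarith only [mul_le_mul_of_nonneg_left hSW (show (0:ℝ) ≤ 4 * W by positivity)]
    have hfb : Y * S ^ 3 - 4 * d ^ 2 * S * W ^ 3
        = Y * (S - 2 * d * W) * (S ^ 2 + 2 * d * S * W + 4 * d ^ 2 * W ^ 2)
          + 4 * d ^ 2 * W ^ 3 := by
      linear_combination 4 * d ^ 2 * W ^ 3 * h2dY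
    have hb : |4 * d ^ 2 * S * W ^ 3 - Y * S ^ 3| ≤ 1796 * d ^ 2 * W ^ 3 := by
      rw [abs_sub_comm, hfb]
      calc |Y * (S - 2 * d * W) * (S ^ 2 + 2 * d * S * W + 4 * d ^ 2 * W ^ 2)
              + 4 * d ^ 2 * W ^ 3|
          ≤ |Y * (S - 2 * d * W) * (S ^ 2 + 2 * d * S * W + 4 * d ^ 2 * W ^ 2)|
              + |4 * d ^ 2 * W ^ 3| := abs_add_le _ _
        _ = Y * |S - 2 * d * W| * (S ^ 2 + 2 * d * S * W + 4 * d ^ 2 * W ^ 2)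
              + 4 * d ^ 2 * W ^ 3 := by
            rw [abs_mul, abs_mul, abs_of_pos hY0, abs_of_pos hquad0,
              abs_of_nonneg (by positivity : (0:ℝ) ≤ 4 * d ^ 2 * W ^ 3)]
        _ ≤ Y * 4 * (7 * S ^ 2) + 4 * d ^ 2 * W ^ 3 := by gcongr
        _ ≤ 1796 * d ^ 2 * W ^ 3 := by
            nlinarith only [mul_le_mul_of_nonneg_left hdY (show (0:ℝ) ≤ 28 * S ^ 2 by positivity),
              hScube, hd0, hd, mul_pos (mul_pos hd0 hd0) (pow_pos hWpos 3)]
    have hnum : |4 * d ^ 2 * (1 + r) * S * W ^ 3 - (W + r * Y) * S ^ 3|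
        ≤ 1796 * d ^ 2 * (1 + r) * W ^ 3 := by
      have hsplit : 4 * d ^ 2 * (1 + r) * S * W ^ 3 - (W + r * Y) * S ^ 3
          = (4 * d ^ 2 * S * W ^ 3 - W * S ^ 3)
            + r * (4 * d ^ 2 * S * W ^ 3 - Y * S ^ 3) := by ring
      rw [hsplit]
      calc |(4 * d ^ 2 * S * W ^ 3 - W * S ^ 3)
              + r * (4 * d ^ 2 * S * W ^ 3 - Y * S ^ 3)|
          ≤ |4 * d ^ 2 * S * W ^ 3 - W * S ^ 3|
              + |r * (4 * d ^ 2 * S * W ^ 3 - Y * S ^ 3)| := abs_add_le _ _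
        _ = |4 * d ^ 2 * S * W ^ 3 - W * S ^ 3|
              + r * |4 * d ^ 2 * S * W ^ 3 - Y * S ^ 3| := by
            rw [abs_mul, abs_of_pos hr0]
        _ ≤ 64 * d ^ 2 * W ^ 3 + r * (1796 * d ^ 2 * W ^ 3) :=
            add_le_add ha (mul_le_mul_of_nonneg_left hb hr0.le)
        _ ≤ 1796 * d ^ 2 * (1 + r) * W ^ 3 := by
            nlinarith only [mul_nonneg (sq_nonneg d) (pow_nonneg hW0 3), hr0]
    have hA : |4 * d ^ 2 * (1 + r) / S ^ 2 - (W + r * Y) / W ^ 3|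
        ≤ 1796 * d ^ 2 * (1 + r) / S ^ 3 := by
      have heqA : 4 * d ^ 2 * (1 + r) / S ^ 2 - (W + r * Y) / W ^ 3
          = (4 * d ^ 2 * (1 + r) * S * W ^ 3 - (W + r * Y) * S ^ 3) / (S ^ 3 * W ^ 3) := by
        field_simp
      rw [heqA, abs_div, abs_of_pos (by positivity : (0:ℝ) < S ^ 3 * W ^ 3),
        div_le_div_iff₀ (by positivity) (by positivity)]
      calc |4 * d ^ 2 * (1 + r) * S * W ^ 3 - (W + r * Y) * S ^ 3| * S ^ 3
          ≤ (1796 * d ^ 2 * (1 + r) * W ^ 3) * S ^ 3 :=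
            mul_le_mul_of_nonneg_right hnum (by positivity)
        _ = 1796 * d ^ 2 * (1 + r) * (S ^ 3 * W ^ 3) := by ring
    calc |z1| / (d * r ^ 2) * |4 * d ^ 2 * (1 + r) / S ^ 2 - (W + r * Y) / W ^ 3|
        ≤ |z1| / (d * r ^ 2) * (1796 * d ^ 2 * (1 + r) / S ^ 3) :=
          mul_le_mul_of_nonneg_left hA (by positivity)
      _ = 1796 * d * |z1| * (1 + r) / (r ^ 2 * S ^ 3) := by
          field_simp
end
end
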